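/- arXiv:1607.02101 — 3 statements merged into one kernel-verified Lean document; each statement's English description precedes it below -/
import Mathlib

section
/- Let w be a Schwarz function with Taylor expansion w(z) = w₁z + w₂z² + ⋯, and let t be a real number. Then |w₂ − t·w₁²| ≤ −t if t < −1, |w₂ − t·w₁²| ≤ 1 if −1 ≤ t ≤ 1, and |w₂ − t·w₁²| ≤ t if t > 1. -/
/-!
By the Schwarz lemma `g(z) = w(z)/z` maps the disk into the closed disk, with `g(0) = w₁` and
`g'(0) = w₂`. Composing `g` with the disk automorphism sending `g(0)` to `0` and applying the
Schwarz lemma again gives the Schwarz–Pick bound `|w₂| ≤ 1 - |w₁|²` (when `|g(0)| = 1`, `g` is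
constant by the maximum modulus principle). Hence
`|w₂ - t w₁²| ≤ (1 - |w₁|²) + |t| |w₁|² ≤ max 1 |t|`.
-/

open Metric Set ComplexConjugate

theorem AnalyticAt.two_nsmul_deriv_dslope {𝕜 E : Type*} [NontriviallyNormedField 𝕜]
    [NormedAddCommGroup E] [NormedSpace 𝕜 E] [CompleteSpace E] {f : 𝕜 → E} {c : 𝕜}
    (hf : AnalyticAt 𝕜 f c) : 2 • deriv (dslope f c) c = iteratedDeriv 2 f c := by
  obtain ⟨p, hp⟩ := hf
  rw [hp.has_fpower_series_dslope_fslope.deriv, iteratedDeriv_eq_iteratedFDeriv]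
  obtain ⟨r, hr⟩ := hp
  rw [← hr.factorial_smul]
  have hcoeff := p.coeff_fslope (n := 1)
  simp only [FormalMultilinearSeries.coeff, Pi.one_def] at hcoeff
  rw [hcoeff]
  rfl

namespace Complex

theorem normSq_one_sub_conj_mul_sub_normSq_sub (a u : ℂ) :
    normSq (1 - conj a * u) - normSq (u - a) = (1 - normSq a) * (1 - normSq u) := by
  simp only [normSq_apply, sub_re, sub_im, mul_re, mul_im, conj_re, conj_im, one_re, one_im]
  ring

theorem norm_sub_le_norm_one_sub_conj_mul {a u : ℂ} (ha : ‖a‖ ≤ 1) (hu : ‖u‖ ≤ 1) :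
    ‖u - a‖ ≤ ‖1 - conj a * u‖ := by
  have key := normSq_one_sub_conj_mul_sub_normSq_sub a u
  simp only [normSq_eq_norm_sq] at key
  rw [← sq_le_sq₀ (norm_nonneg _) (norm_nonneg _)]
  nlinarith [mul_nonneg (sub_nonneg.2 (pow_le_one₀ (n := 2) (norm_nonneg a) ha))
    (sub_nonneg.2 (pow_le_one₀ (n := 2) (norm_nonneg u) hu))]

theorem one_sub_conj_mul_ne_zero {a u : ℂ} (ha : ‖a‖ < 1) (hu : ‖u‖ ≤ 1) :
    1 - conj a * u ≠ 0 := by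
  refine sub_ne_zero.2 fun h => ?_
  have : ‖conj a * u‖ < 1 := by
    rw [norm_mul, norm_conj]
    exact mul_lt_one_of_nonneg_of_lt_one_left (norm_nonneg a) ha hu
  simp [← h] at this

theorem hasDerivAt_mobius_comp {g : ℂ → ℂ} {c : ℂ} (hg : DifferentiableAt ℂ g c)
    (hc : ‖g c‖ < 1) :
    HasDerivAt (fun z => (g z - g c) / (1 - conj (g c) * g z))
      (deriv g c / (1 - ‖g c‖ ^ 2 : ℝ)) c := by
  have hden : 1 - conj (g c) * g c = (1 - ‖g c‖ ^ 2 : ℝ) := by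
    push_cast
    rw [conj_mul']
  have hne : 1 - conj (g c) * g c ≠ 0 := one_sub_conj_mul_ne_zero hc hc.le
  refine ((hg.hasDerivAt.sub_const (g c)).div
    ((hg.hasDerivAt.const_mul (conj (g c))).const_sub 1) hne).congr_deriv ?_
  rw [← hden]
  field_simp
  ring

section SchwarzPick

variable {g : ℂ → ℂ} {c : ℂ} {R : ℝ}

theorem norm_deriv_le_one_sub_sq_div_of_mapsTo_ball_of_norm_lt_one
    (hd : DifferentiableOn ℂ g (ball c R))
    (h_maps : MapsTo g (ball c R) (closedBall 0 1)) (hR : 0 < R) (hc : ‖g c‖ < 1) :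
    ‖deriv g c‖ ≤ (1 - ‖g c‖ ^ 2) / R := by
  set h : ℂ → ℂ := fun z => (g z - g c) / (1 - conj (g c) * g z)
  have hmem : c ∈ ball c R := mem_ball_self hR
  have hden : 0 < 1 - ‖g c‖ ^ 2 := by nlinarith [norm_nonneg (g c)]
  have hh_maps : MapsTo h (ball c R) (closedBall (h c) 1) := by
    intro z hz
    have hz1 : ‖g z‖ ≤ 1 := mem_closedBall_zero_iff.1 (h_maps hz)
    simp only [h, sub_self, zero_div, mem_closedBall_zero_iff, norm_div]
    exact div_le_one_of_le₀ (norm_sub_le_norm_one_sub_conj_mul hc.le hz1) (norm_nonneg _)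
  have hh_diff : DifferentiableOn ℂ h (ball c R) := fun z hz =>
    ((hd z hz).sub_const _).div ((hd z hz).const_mul _ |>.const_sub 1)
      (one_sub_conj_mul_ne_zero hc (mem_closedBall_zero_iff.1 (h_maps hz)))
  have hschwarz := norm_deriv_le_div_of_mapsTo_ball hh_diff hh_maps hR
  rw [(hasDerivAt_mobius_comp (hd.differentiableAt (isOpen_ball.mem_nhds hmem)) hc).deriv,
    norm_div, norm_real, Real.norm_of_nonneg hden.le, div_le_div_iff₀ hden hR] at hschwarz
  rw [le_div_iff₀ hR]
  linarith

theorem deriv_eq_zero_of_mapsTo_ball_of_norm_eq_one (hd : DifferentiableOn ℂ g (ball c R))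
    (h_maps : MapsTo g (ball c R) (closedBall 0 1)) (hR : 0 < R) (hc : ‖g c‖ = 1) :
    deriv g c = 0 := by
  have hmem : c ∈ ball c R := mem_ball_self hR
  have hmax : IsMaxOn (norm ∘ g) (ball c R) c := fun z hz => by
    simpa [hc] using h_maps hz
  have hconst := eqOn_of_isPreconnected_of_isMaxOn_norm (convex_ball c R).isPreconnected
    isOpen_ball hd hmem hmax
  rw [(hconst.eventuallyEq_of_mem (isOpen_ball.mem_nhds hmem)).deriv_eq]
  exact deriv_const c _

theorem norm_deriv_le_one_sub_sq_div_of_mapsTo_ball (hd : DifferentiableOn ℂ g (ball c R))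
    (h_maps : MapsTo g (ball c R) (closedBall 0 1)) (hR : 0 < R) :
    ‖deriv g c‖ ≤ (1 - ‖g c‖ ^ 2) / R := by
  rcases (mem_closedBall_zero_iff.1 (h_maps (mem_ball_self hR))).lt_or_eq with hc | hc
  · exact norm_deriv_le_one_sub_sq_div_of_mapsTo_ball_of_norm_lt_one hd h_maps hR hc
  · simp [deriv_eq_zero_of_mapsTo_ball_of_norm_eq_one hd h_maps hR hc, hc]

end SchwarzPick

theorem norm_iteratedDeriv_two_div_two_le {w : ℂ → ℂ} (hw : AnalyticOnNhd ℂ w (ball 0 1))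
    (hw0 : w 0 = 0) (h_maps : MapsTo w (ball 0 1) (closedBall 0 1)) :
    ‖iteratedDeriv 2 w 0 / 2‖ ≤ 1 - ‖deriv w 0‖ ^ 2 := by
  have hd : DifferentiableOn ℂ w (ball 0 1) := hw.differentiableOn
  have hg_maps : MapsTo (dslope w 0) (ball 0 1) (closedBall 0 1) := fun z hz => by
    simpa using norm_dslope_le_div_of_mapsTo_ball hd (by rwa [hw0]) hz
  have hg_diff := (differentiableOn_dslope (ball_mem_nhds 0 one_pos)).2 hd
  have hpick := norm_deriv_le_one_sub_sq_div_of_mapsTo_ball hg_diff hg_maps one_pos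
  rw [dslope_same, div_one] at hpick
  rwa [← (hw 0 (mem_ball_self one_pos)).two_nsmul_deriv_dslope, two_nsmul, ← two_mul,
    mul_div_cancel_left₀ _ two_ne_zero]

theorem norm_sub_ofReal_mul_sq_le_max {a b : ℂ} (h : ‖b‖ ≤ 1 - ‖a‖ ^ 2) (t : ℝ) :
    ‖b - t * a ^ 2‖ ≤ max 1 |t| := by
  have ha : ‖a‖ ^ 2 ≤ 1 := by linarith [norm_nonneg b]
  calc ‖b - t * a ^ 2‖ ≤ ‖b‖ + |t| * ‖a‖ ^ 2 :=
        (norm_sub_le _ _).trans_eq (by rw [norm_mul, norm_pow, norm_real, Real.norm_eq_abs])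
    _ ≤ (1 - ‖a‖ ^ 2) * 1 + ‖a‖ ^ 2 * |t| := by linarith
    _ ≤ (1 - ‖a‖ ^ 2) * max 1 |t| + ‖a‖ ^ 2 * max 1 |t| := by
        gcongr
        exacts [le_max_left _ _, le_max_right _ _]
    _ = max 1 |t| := by ring

end Complex

theorem schwarz_coeff_bound_real
    (w : ℂ → ℂ)
    (hw : AnalyticOnNhd ℂ w (Metric.ball (0 : ℂ) 1))
    (hw0 : w 0 = 0)
    (hwb : ∀ z ∈ Metric.ball (0 : ℂ) 1, ‖w z‖ < 1)
    (w1 w2 : ℂ)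
    (hw1 : w1 = deriv w 0)
    (hw2 : w2 = iteratedDeriv 2 w 0 / 2)
    (t : ℝ) :
    (t < -1 → ‖w2 - (t : ℂ) * w1 ^ 2‖ ≤ -t) ∧
    (-1 ≤ t ∧ t ≤ 1 → ‖w2 - (t : ℂ) * w1 ^ 2‖ ≤ 1) ∧
    (1 < t → ‖w2 - (t : ℂ) * w1 ^ 2‖ ≤ t) := by
  subst hw1 hw2
  have h_maps : MapsTo w (ball 0 1) (closedBall 0 1) := fun z hz =>
    mem_closedBall_zero_iff.2 (hwb z hz).le
  have hbound := Complex.norm_sub_ofReal_mul_sq_le_max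
    (Complex.norm_iteratedDeriv_two_div_two_le hw hw0 h_maps) t
  refine ⟨fun ht => ?_, fun ht => ?_, fun ht => ?_⟩
  · rwa [abs_of_neg (by linarith), max_eq_right (by linarith)] at hbound
  · rwa [max_eq_left (abs_le.2 ht)] at hbound
  · rwa [abs_of_pos (by linarith), max_eq_right ht.le] at hbound
end

section
/- There exist r > 0 and an analytic function g on {z ∈ ℂ : |z| < r} such that g(z) = z·D_qF(z)/F(z) for all 0 < |z| < r, and g has Taylor expansion g(z) = 1 − (([2]_q − 1)/3)·a₂·z + ((([3]_q − 1)/10)·a₃ − (([2]_q − 1)/9)·a₂²)·z² + O(z³); that is, g(0) = 1, g′(0) = −(([2]_q − 1)/3)·a₂ and g″(0)/2 = (([3]_q − 1)/10)·a₃ − (([2]_q − 1)/9)·a₂². -/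
/-!
Put `P(z) = (F(z) - F(qz))/(1 - q)`, so that `z D_qF(z) = P(z)` for `z ≠ 0`. Termwise, `P` has
Taylor coefficients `[n]_q bₙ` where `bₙ` are those of `F`, and `F(0) = P(0) = 0`. Hence
`K = dslope F 0` and `H = dslope P 0` are analytic with Taylor coefficients `bₙ₊₁` and
`[n+1]_q bₙ₊₁`, in particular `K(0) = H(0) = b₁ = 1`, and `g = H / K` is analytic near `0`.
Its first two Taylor coefficients follow from the Leibniz rule applied to `H = g K`.
-/

open FormalMultilinearSeries Topology
open scoped ENNReal NNReal Nat

section PowerSeries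

variable {𝕜 : Type*} [RCLike 𝕜] {c : ℕ → 𝕜}

theorem FormalMultilinearSeries.le_radius_ofScalars_of_summable {r : ℝ≥0}
    (h : ∀ z ∈ Metric.ball (0 : 𝕜) r, Summable fun n => c n * z ^ n) :
    (r : ℝ≥0∞) ≤ (ofScalars 𝕜 c).radius := by
  refine ENNReal.le_of_forall_nnreal_lt fun s hs => ?_
  have hsum := h ((s : ℝ) : 𝕜) (by simpa using hs)
  refine (ofScalars 𝕜 c).le_radius_of_tendsto (l := 0) ?_
  simpa [ofScalars_norm] using hsum.tendsto_atTop_zero.norm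

theorem hasFPowerSeriesOnBall_ofScalars_of_hasSum {u : 𝕜 → 𝕜} {r : ℝ≥0} (hr : 0 < r)
    (h : ∀ z ∈ Metric.ball (0 : 𝕜) r, HasSum (fun n => c n * z ^ n) (u z)) :
    HasFPowerSeriesOnBall u (ofScalars 𝕜 c) 0 r where
  r_le := le_radius_ofScalars_of_summable fun z hz => (h z hz).summable
  r_pos := by exact_mod_cast hr
  hasSum {y} hy := by simpa [ofScalars_apply_eq, mul_comm] using h y (by simpa using hy)

end PowerSeries

section TaylorCoefficients

variable {𝕜 : Type*} [NontriviallyNormedField 𝕜] {f g : 𝕜 → 𝕜} {x : 𝕜}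

theorem HasFPowerSeriesAt.iteratedDeriv_eq_factorial_mul_coeff [CompleteSpace 𝕜] [CharZero 𝕜]
    {p : FormalMultilinearSeries 𝕜 𝕜 𝕜} (hf : HasFPowerSeriesAt f p x) (n : ℕ) :
    iteratedDeriv n f x = n ! * p.coeff n := by
  rw [← hf.analyticAt.hasFPowerSeriesAt.eq_formalMultilinearSeries hf, coeff_ofScalars,
    mul_div_cancel₀ _ (Nat.cast_ne_zero.mpr n.factorial_ne_zero)]

theorem HasFPowerSeriesAt.iteratedDeriv_dslope [CompleteSpace 𝕜] [CharZero 𝕜]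
    {p : FormalMultilinearSeries 𝕜 𝕜 𝕜} (hf : HasFPowerSeriesAt f p x) (n : ℕ) :
    iteratedDeriv n (dslope f x) x = n ! * p.coeff (n + 1) := by
  rw [hf.has_fpower_series_dslope_fslope.iteratedDeriv_eq_factorial_mul_coeff, coeff_fslope]

theorem iteratedDeriv_two_mul (hf : ContDiffAt 𝕜 2 f x) (hg : ContDiffAt 𝕜 2 g x) :
    iteratedDeriv 2 (f * g) x =
      iteratedDeriv 2 f x * g x + 2 * (deriv f x * deriv g x) + f x * iteratedDeriv 2 g x := by
  rw [iteratedDeriv_mul hf hg]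
  simp only [Finset.sum_range_succ, Finset.range_one, Finset.sum_singleton, iteratedDeriv_zero,
    iteratedDeriv_one, Nat.choose_zero_right, Nat.choose_succ_self_right, Nat.choose_self,
    Nat.cast_one, Nat.cast_ofNat, Nat.reduceAdd, Nat.add_one_sub_one, tsub_zero, tsub_self]
  ring

theorem iteratedDeriv_two_eq_of_div [CompleteSpace 𝕜] (hf : AnalyticAt 𝕜 f x)
    (hg : AnalyticAt 𝕜 g x) (hgx : g x ≠ 0) :
    iteratedDeriv 2 f x = iteratedDeriv 2 (f / g) x * g x + 2 * (deriv (f / g) x * deriv g x)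
      + (f / g) x * iteratedDeriv 2 g x := by
  have hfg : f =ᶠ[𝓝 x] f / g * g := by
    filter_upwards [hg.continuousAt.eventually_ne hgx] with z hz
    simp [hz]
  rw [hfg.iteratedDeriv_eq, iteratedDeriv_two_mul (hf.div hg hgx).contDiffAt hg.contDiffAt]

theorem taylor_div_of_apply_eq_one [CompleteSpace 𝕜] (hf : AnalyticAt 𝕜 f x)
    (hg : AnalyticAt 𝕜 g x) (hfx : f x = 1) (hgx : g x = 1) :
    (f / g) x = 1 ∧ deriv (f / g) x = deriv f x - deriv g x ∧
      iteratedDeriv 2 (f / g) x =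
        iteratedDeriv 2 f x - iteratedDeriv 2 g x - 2 * deriv g x * (deriv f x - deriv g x) := by
  have hgx₀ : g x ≠ 0 := by simp [hgx]
  have hval : (f / g) x = 1 := by simp [hfx, hgx]
  have hderiv : deriv (f / g) x = deriv f x - deriv g x := by
    rw [deriv_div hf.differentiableAt hg.differentiableAt hgx₀, hfx, hgx]
    ring
  refine ⟨hval, hderiv, ?_⟩
  have h2 := iteratedDeriv_two_eq_of_div hf hg hgx₀
  rw [hval, hderiv, hgx] at h2
  linear_combination -h2

theorem dslope_div_dslope_of_ne {z c : 𝕜} (hz : z ≠ c) (hf : f c = 0) (hg : g c = 0) :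
    (dslope f c / dslope g c) z = f z / g z := by
  simp [dslope_of_ne _ hz, slope_def_field, hf, hg, div_div_div_cancel_right₀ (sub_ne_zero.2 hz)]

end TaylorCoefficients

section DslopeOfPowerSeries

variable {c : ℕ → ℂ} {u : ℂ → ℂ} {r : ℝ≥0}

theorem analyticOnNhd_dslope_of_hasSum (hr : 0 < r)
    (h : ∀ z ∈ Metric.ball (0 : ℂ) r, HasSum (fun n => c n * z ^ n) (u z)) :
    AnalyticOnNhd ℂ (dslope u 0) (Metric.ball 0 r) := by
  have hu := (hasFPowerSeriesOnBall_ofScalars_of_hasSum hr h).analyticOnNhd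
  rw [Metric.eball_coe] at hu
  exact ((Complex.differentiableOn_dslope (Metric.ball_mem_nhds 0 (by exact_mod_cast hr))).2
    hu.differentiableOn).analyticOnNhd Metric.isOpen_ball

theorem iteratedDeriv_dslope_of_hasSum (hr : 0 < r)
    (h : ∀ z ∈ Metric.ball (0 : ℂ) r, HasSum (fun n => c n * z ^ n) (u z)) (n : ℕ) :
    iteratedDeriv n (dslope u 0) 0 = n ! * c (n + 1) := by
  rw [(hasFPowerSeriesOnBall_ofScalars_of_hasSum hr h).hasFPowerSeriesAt.iteratedDeriv_dslope,
    coeff_ofScalars]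

end DslopeOfPowerSeries

theorem ContinuousAt.exists_ball_forall_ne {α β : Type*} [PseudoMetricSpace α] [TopologicalSpace β]
    [T1Space β] {f : α → β} {x : α} {y : β} (hf : ContinuousAt f x) (hfx : f x ≠ y) {R : ℝ}
    (hR : 0 < R) : ∃ r, 0 < r ∧ r ≤ R ∧ ∀ z ∈ Metric.ball x r, f z ≠ y := by
  obtain ⟨ε, hε, hball⟩ := Metric.eventually_nhds_iff_ball.1 (hf.eventually_ne hfx)
  exact ⟨min ε R, by positivity, min_le_right _ _,
    fun z hz => hball z (Metric.ball_subset_ball (min_le_left _ _) hz)⟩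


theorem hasSum_qDifference {𝕜 : Type*} [NormedField 𝕜] {b : ℕ → 𝕜} {F : 𝕜 → 𝕜} {q : 𝕜}
    {R : ℝ} (hq : ‖q‖ ≤ 1) (hF : ∀ z ∈ Metric.ball (0 : 𝕜) R, HasSum (fun n => b n * z ^ n) (F z))
    (z : 𝕜) (hz : z ∈ Metric.ball (0 : 𝕜) R) :
    HasSum (fun n => (1 - q ^ n) / (1 - q) * b n * z ^ n) ((F z - F (q * z)) / (1 - q)) := by
  have hqz : q * z ∈ Metric.ball (0 : 𝕜) R := by
    rw [mem_ball_zero_iff, norm_mul] at *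
    exact lt_of_le_of_lt (mul_le_of_le_one_left (norm_nonneg z) hq) hz
  convert ((hF z hz).sub (hF _ hqz)).div_const (1 - q) using 1
  funext n
  ring

theorem taylor_expansion_starlike_quotient_general
    (q : ℝ) (hq0 : 0 < q) (hq1 : q < 1)
    (a : ℕ → ℂ) (ha1 : a 1 = 1)
    (F DqF : ℂ → ℂ)
    (hF : ∀ z ∈ Metric.ball (0 : ℂ) 1,
      HasSum (fun n : ℕ =>
        (-1 : ℂ) ^ (n - 1) * a n / (((2 * n - 1 : ℕ) : ℂ) * ((n - 1).factorial : ℂ)) * z ^ n)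
        (F z))
    (hDqF : ∀ z : ℂ, z ≠ 0 → DqF z = (F z - F ((q : ℂ) * z)) / ((1 - (q : ℂ)) * z))
    (ϑ2 ϑ3 : ℝ)
    (hϑ2 : ϑ2 = (1 - q ^ 2) / (1 - q) - 1)
    (hϑ3 : ϑ3 = (1 - q ^ 3) / (1 - q) - 1)
    :
    ∃ r : ℝ, 0 < r ∧ ∃ g : ℂ → ℂ,
      AnalyticOnNhd ℂ g (Metric.ball (0 : ℂ) r) ∧
      (∀ z : ℂ, z ≠ 0 → ‖z‖ < r → g z = z * DqF z / F z) ∧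
      g 0 = 1 ∧
      deriv g 0 = -((ϑ2 : ℂ) / 3) * a 2 ∧
      iteratedDeriv 2 g 0 / 2 = ((ϑ3 : ℂ) / 10) * a 3 - ((ϑ2 : ℂ) / 9) * (a 2) ^ 2 := by
  set b : ℕ → ℂ := fun n =>
    (-1 : ℂ) ^ (n - 1) * a n / (((2 * n - 1 : ℕ) : ℂ) * ((n - 1).factorial : ℂ))
  have hb1 : b 1 = 1 := by simp [b, ha1]
  have hb2 : b 2 = -a 2 / 3 := by norm_num [b]
  have hb3 : b 3 = a 3 / 10 := by norm_num [b, Nat.factorial]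
  have hq : (1 : ℂ) - q ≠ 0 := sub_ne_zero.2 (by exact_mod_cast hq1.ne')
  set P : ℂ → ℂ := fun z => (F z - F (q * z)) / (1 - q)
  have hFsum : ∀ z ∈ Metric.ball (0 : ℂ) (1 : ℝ≥0), HasSum (fun n => b n * z ^ n) (F z) := by
    simpa using hF
  have hPsum : ∀ z ∈ Metric.ball (0 : ℂ) (1 : ℝ≥0),
      HasSum (fun n => (1 - (q : ℂ) ^ n) / (1 - q) * b n * z ^ n) (P z) :=
    hasSum_qDifference (by simpa [abs_of_pos hq0] using hq1.le) hFsum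
  have hK := analyticOnNhd_dslope_of_hasSum one_pos hFsum
  have hH := analyticOnNhd_dslope_of_hasSum one_pos hPsum
  have hKcoeff := iteratedDeriv_dslope_of_hasSum one_pos hFsum
  have hHcoeff := iteratedDeriv_dslope_of_hasSum one_pos hPsum
  have hK0 : dslope F 0 0 = 1 := by simpa [hb1] using hKcoeff 0
  have hH0 : dslope P 0 0 = 1 := by simpa [hb1, hq] using hHcoeff 0
  obtain ⟨r, hr0, hr1, hKne⟩ :=
    (hK 0 (by simp)).continuousAt.exists_ball_forall_ne (hK0 ▸ one_ne_zero) one_pos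
  have hsub := Metric.ball_subset_ball (x := (0 : ℂ)) hr1
  obtain ⟨hg0, hg1, hg2⟩ := taylor_div_of_apply_eq_one (hH 0 (by simp)) (hK 0 (by simp)) hH0 hK0
  refine ⟨r, hr0, dslope P 0 / dslope F 0, (hH.mono hsub).div (hK.mono hsub) hKne,
    fun z hz _ => ?_, hg0, ?_, ?_⟩
  · have hF0 : F 0 = 0 := by
      simpa [b] using (hFsum 0 (by simp)).unique (hasSum_single 0 fun n hn => by simp [hn])
    rw [dslope_div_dslope_of_ne hz (by simp [P, hF0]) hF0, hDqF z hz]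
    simp only [P]
    field_simp
  · rw [hg1, ← iteratedDeriv_one, ← iteratedDeriv_one, hKcoeff, hHcoeff, hb2, hϑ2]
    push_cast [Nat.factorial]
    ring
  · rw [hg2, ← iteratedDeriv_one, ← iteratedDeriv_one, hKcoeff, hHcoeff, hKcoeff, hHcoeff, hb2,
      hb3, hϑ2, hϑ3]
    push_cast [Nat.factorial]
    ring

theorem taylor_expansion_starlike_quotient
    (q : ℝ) (hq0 : 0 < q) (hq1 : q < 1)
    (a : ℕ → ℂ) (ha0 : a 0 = 0) (ha1 : a 1 = 1)
    (f F DqF : ℂ → ℂ)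
    (hf : ∀ z ∈ Metric.ball (0 : ℂ) 1, HasSum (fun n : ℕ => a n * z ^ n) (f z))
    (hF : ∀ z ∈ Metric.ball (0 : ℂ) 1,
      HasSum (fun n : ℕ =>
        (-1 : ℂ) ^ (n - 1) * a n / (((2 * n - 1 : ℕ) : ℂ) * ((n - 1).factorial : ℂ)) * z ^ n)
        (F z))
    (hDq0 : DqF 0 = 1)
    (hDqF : ∀ z : ℂ, z ≠ 0 → DqF z = (F z - F ((q : ℂ) * z)) / ((1 - (q : ℂ)) * z))
    (ϑ2 ϑ3 : ℝ)
    (hϑ2 : ϑ2 = (1 - q ^ 2) / (1 - q) - 1)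
    (hϑ3 : ϑ3 = (1 - q ^ 3) / (1 - q) - 1)
    :
    ∃ r : ℝ, 0 < r ∧ ∃ g : ℂ → ℂ,
      AnalyticOnNhd ℂ g (Metric.ball (0 : ℂ) r) ∧
      (∀ z : ℂ, z ≠ 0 → ‖z‖ < r → g z = z * DqF z / F z) ∧
      g 0 = 1 ∧
      deriv g 0 = -((ϑ2 : ℂ) / 3) * a 2 ∧
      iteratedDeriv 2 g 0 / 2 = ((ϑ3 : ℂ) / 10) * a 3 - ((ϑ2 : ℂ) / 9) * (a 2) ^ 2 :=
  taylor_expansion_starlike_quotient_general q hq0 hq1 a ha1 F DqF hF hDqF ϑ2 ϑ3 hϑ2 hϑ3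
end

section
/- Under the stated spirallike-starlike subordination hypothesis, writing ϑ₂ = [2]_q − 1 and ϑ₃ = [3]_q − 1, the Taylor coefficients of f satisfy a₂ = −3·b·p₁·w₁/(ϱ·ϑ₂) and a₃ = (10·b/(ϱ·ϑ₃))·(p₁·w₂ + p₂·w₁² + b·p₁²·w₁²/(ϱ·ϑ₂)). -/
/-!
Put `L(z) = z·D_qF(z) − F(z) = (F(z) − F(qz))/(1 − q) − F(z)`, whose Taylor coefficients are
`([n]_q − 1)·cₙ` when `F = Σ cₙ zⁿ`. Clearing denominators, the subordination reads
`ϱ·L = b·F·(p ∘ w − 1)` on the disk, an identity between functions analytic at `0`.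
Since `F(0) = 0 = p(w(0)) − 1`, comparing second and third Taylor coefficients (Leibniz rule,
and the chain rule for `p ∘ w`) gives a triangular linear system for `c₂ = −a₂/3` and
`c₃ = a₃/10`, whose solution is the stated pair of formulas.
-/

open Filter Topology FormalMultilinearSeries

/-- The `q`-number `[n]_q`; at `q = 1` it takes the junk value `0` rather than `n`. -/
def qNumber {K : Type*} [DivisionRing K] (q : K) (n : ℕ) : K := (1 - q ^ n) / (1 - q)

theorem qNumber_eq_geom_sum {K : Type*} [Field K] {q : K} (hq : q ≠ 1) (n : ℕ) :
    qNumber q n = ∑ i ∈ Finset.range n, q ^ i := by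
  rw [geom_sum_eq hq, qNumber, ← neg_sub, ← neg_sub q, neg_div_neg_eq]

theorem one_lt_qNumber {K : Type*} [Field K] [LinearOrder K] [IsStrictOrderedRing K] {q : K}
    (hq0 : 0 < q) (hq1 : q ≠ 1) {n : ℕ} (hn : 2 ≤ n) : 1 < qNumber q n := by
  rw [qNumber_eq_geom_sum hq1]
  calc (1 : K) < ∑ i ∈ Finset.range 2, q ^ i := by simpa [Finset.sum_range_succ] using hq0
    _ ≤ ∑ i ∈ Finset.range n, q ^ i :=
      Finset.sum_le_sum_of_subset_of_nonneg (Finset.range_subset_range.mpr hn)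
        fun i _ _ => pow_nonneg hq0.le i

theorem hasSum_qDifference_sub {𝕜 : Type*} [NormedField 𝕜] {g : 𝕜 → 𝕜} {c : ℕ → 𝕜} {r : ℝ}
    {q : 𝕜} (hq : ‖q‖ ≤ 1) (hg : ∀ z ∈ Metric.ball (0 : 𝕜) r, HasSum (fun n => c n * z ^ n) (g z))
    {z : 𝕜} (hz : z ∈ Metric.ball 0 r) :
    HasSum (fun n => c n * (qNumber q n - 1) * z ^ n) ((g z - g (q * z)) / (1 - q) - g z) := by
  have hqz : q * z ∈ Metric.ball 0 r := by
    rw [mem_ball_zero_iff] at hz ⊢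
    rw [norm_mul]
    exact lt_of_le_of_lt (mul_le_of_le_one_left (norm_nonneg z) hq) hz
  refine (((hg z hz).sub (hg _ hqz)).div_const (1 - q) |>.sub (hg z hz)).congr_fun fun n => ?_
  simp only [qNumber, mul_pow]
  ring

section PowerSeries

variable {𝕜 : Type*} [NontriviallyNormedField 𝕜]

theorem hasFPowerSeriesAt_ofScalars_of_hasSum {g : 𝕜 → 𝕜} {c : ℕ → 𝕜} {r : ℝ} (hr : 0 < r)
    (hg : ∀ z ∈ Metric.ball (0 : 𝕜) r, HasSum (fun n => c n * z ^ n) (g z)) :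
    HasFPowerSeriesAt g (ofScalars 𝕜 c) 0 := by
  obtain ⟨z₀, hz₀, hz₀r⟩ := NormedField.exists_norm_lt 𝕜 hr
  have hball : Metric.eball (0 : 𝕜) ‖z₀‖₊ ⊆ Metric.ball 0 r := fun y hy => by
    simp only [Metric.mem_eball, edist_zero_right, enorm_eq_nnnorm, ENNReal.coe_lt_coe] at hy
    exact mem_ball_zero_iff.mpr (lt_trans (NNReal.coe_lt_coe.mpr hy) hz₀r)
  refine ⟨‖z₀‖₊, ⟨?_, by simpa using hz₀, fun {y} hy => ?_⟩⟩
  · refine (ofScalars 𝕜 c).le_radius_of_tendsto (l := 0) ?_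
    simpa [ofScalars_norm, norm_mul, norm_pow] using
      ((hg z₀ (mem_ball_zero_iff.mpr hz₀r)).summable.tendsto_atTop_zero).norm
  · simpa [ofScalars_apply_eq, mul_comm] using hg y (hball hy)

theorem HasFPowerSeriesAt.iteratedDeriv_eq_factorial_mul [CompleteSpace 𝕜] {g : 𝕜 → 𝕜}
    {c : ℕ → 𝕜} {x : 𝕜} (hg : HasFPowerSeriesAt g (ofScalars 𝕜 c) x) (n : ℕ) :
    iteratedDeriv n g x = n.factorial * c n := by
  obtain ⟨r, hr⟩ := hg
  rw [iteratedDeriv_eq_iteratedFDeriv, ← hr.factorial_smul 1 n, ofScalars_apply_eq, smul_eq_mul,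
    one_pow, mul_one, nsmul_eq_mul]

end PowerSeries

section Derivatives

variable {𝕜 𝔸 : Type*} [NontriviallyNormedField 𝕜] [NormedRing 𝔸] [NormedAlgebra 𝕜 𝔸]
  {f g : 𝕜 → 𝔸} {x : 𝕜}

theorem iteratedDeriv_two_fun_mul (hf : ContDiffAt 𝕜 2 f x) (hg : ContDiffAt 𝕜 2 g x) :
    iteratedDeriv 2 (fun y => f y * g y) x =
      iteratedDeriv 2 f x * g x + 2 * (deriv f x * deriv g x) + f x * iteratedDeriv 2 g x := by
  simp only [iteratedDeriv_fun_mul hf hg, Finset.sum_range_succ, Finset.range_one,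
    Finset.sum_singleton, Nat.choose_zero_right, Nat.choose_succ_self_right, Nat.choose_self,
    Nat.cast_one, Nat.cast_ofNat, one_mul, iteratedDeriv_zero, iteratedDeriv_one, Nat.reduceAdd,
    tsub_zero, Nat.add_one_sub_one, tsub_self]
  noncomm_ring

theorem iteratedDeriv_three_fun_mul (hf : ContDiffAt 𝕜 3 f x) (hg : ContDiffAt 𝕜 3 g x) :
    iteratedDeriv 3 (fun y => f y * g y) x =
      iteratedDeriv 3 f x * g x + 3 * (iteratedDeriv 2 f x * deriv g x) +
        3 * (deriv f x * iteratedDeriv 2 g x) + f x * iteratedDeriv 3 g x := by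
  simp only [iteratedDeriv_fun_mul hf hg, Finset.sum_range_succ, Finset.range_one,
    Finset.sum_singleton, Nat.choose, Nat.cast_one, Nat.cast_ofNat, one_mul, add_zero,
    iteratedDeriv_zero, iteratedDeriv_one, Nat.reduceAdd, Nat.reduceSub, tsub_zero,
    Nat.add_one_sub_one, tsub_self]
  noncomm_ring

theorem iteratedDeriv_fun_sub_const {n : ℕ} (hn : 0 < n) (c : 𝔸) :
    iteratedDeriv n (fun z => f z - c) x = iteratedDeriv n f x := by
  simpa only [neg_add_eq_sub] using iteratedDeriv_const_add hn (-c) (f := f) (x := x)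

theorem deriv_fun_comp_sub_const {p w : 𝕜 → 𝕜} (hp : DifferentiableAt 𝕜 p (w x))
    (hw : DifferentiableAt 𝕜 w x) (c : 𝕜) :
    deriv (fun z => p (w z) - c) x = deriv p (w x) * deriv w x := by
  rw [deriv_sub_const]
  exact deriv_comp x hp hw

theorem iteratedDeriv_two_fun_comp_sub_const {p w : 𝕜 → 𝕜} (hp : ContDiffAt 𝕜 2 p (w x))
    (hw : ContDiffAt 𝕜 2 w x) (c : 𝕜) :
    iteratedDeriv 2 (fun z => p (w z) - c) x =
      iteratedDeriv 2 p (w x) * deriv w x ^ 2 + deriv p (w x) * iteratedDeriv 2 w x := by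
  rw [iteratedDeriv_fun_sub_const two_pos]
  exact iteratedDeriv_comp_two hp hw

end Derivatives

theorem coeff_two_three_of_eventuallyEq_mul {𝕜 : Type*} [NontriviallyNormedField 𝕜]
    [CompleteSpace 𝕜] [CharZero 𝕜] {F G L : 𝕜 → 𝕜} {c ℓ : ℕ → 𝕜} {ϱ b : 𝕜}
    (hF : HasFPowerSeriesAt F (ofScalars 𝕜 c) 0) (hL : HasFPowerSeriesAt L (ofScalars 𝕜 ℓ) 0)
    (hG : AnalyticAt 𝕜 G 0) (hF0 : F 0 = 0) (hG0 : G 0 = 0)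
    (h : (fun z => ϱ * L z) =ᶠ[𝓝 0] fun z => b * (F z * G z)) :
    ϱ * ℓ 2 = b * (c 1 * deriv G 0) ∧
      ϱ * ℓ 3 = b * (c 2 * deriv G 0 + c 1 * (iteratedDeriv 2 G 0 / 2)) := by
  have key (n : ℕ) : ϱ * iteratedDeriv n L 0 = b * iteratedDeriv n (fun z => F z * G z) 0 := by
    simpa only [iteratedDeriv_const_mul_field] using (h.iteratedDeriv n).eq_of_nhds
  have hF1 : deriv F 0 = c 1 := by simpa using hF.iteratedDeriv_eq_factorial_mul 1
  have h2 := key 2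
  have h3 := key 3
  rw [iteratedDeriv_two_fun_mul hF.analyticAt.contDiffAt hG.contDiffAt] at h2
  rw [iteratedDeriv_three_fun_mul hF.analyticAt.contDiffAt hG.contDiffAt] at h3
  simp only [hL.iteratedDeriv_eq_factorial_mul, hF.iteratedDeriv_eq_factorial_mul, hF0, hG0, hF1,
    Nat.factorial, Nat.succ_eq_add_one, Nat.reduceAdd, Nat.reduceMul, Nat.cast_ofNat] at h2 h3
  constructor
  · linear_combination h2 / 2
  · linear_combination h3 / 6

theorem qDifference_sub_eventuallyEq_of_subordination {𝕜 : Type*} [NontriviallyNormedField 𝕜]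
    {F DqF P : 𝕜 → 𝕜} {s : Set 𝕜} {q b ϱ : 𝕜} (hs : s ∈ 𝓝 0) (hq : q ≠ 1) (hb : b ≠ 0)
    (hF0 : F 0 = 0) (hDqF : ∀ z : 𝕜, z ≠ 0 → DqF z = (F z - F (q * z)) / ((1 - q) * z))
    (hFne : ∀ z ∈ s, z ≠ 0 → F z ≠ 0)
    (hsub : ∀ z ∈ s, z ≠ 0 → 1 + (1 / b) * (ϱ * (z * DqF z / F z) - ϱ) = P z) :
    (fun z => ϱ * ((F z - F (q * z)) / (1 - q) - F z)) =ᶠ[𝓝 0] fun z => b * (F z * (P z - 1)) := by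
  filter_upwards [hs] with z hz
  rcases eq_or_ne z 0 with rfl | hz0
  · simp [hF0]
  · have hq' : 1 - q ≠ 0 := sub_ne_zero.mpr hq.symm
    have hFz := hFne z hz hz0
    rw [← hsub z hz hz0, hDqF z hz0]
    field_simp
    ring

theorem starlike_coeff_formulas_general
    (q : ℝ) (hq0 : 0 < q) (hq1 : q < 1)
    (a : ℕ → ℂ) (ha0 : a 0 = 0) (ha1 : a 1 = 1)
    (F DqF : ℂ → ℂ)
    (hF : ∀ z ∈ Metric.ball (0 : ℂ) 1,
      HasSum (fun n : ℕ =>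
        (-1 : ℂ) ^ (n - 1) * a n / (((2 * n - 1 : ℕ) : ℂ) * ((n - 1).factorial : ℂ)) * z ^ n)
        (F z))
    (hDqF : ∀ z : ℂ, z ≠ 0 → DqF z = (F z - F ((q : ℂ) * z)) / ((1 - (q : ℂ)) * z))
    (ϑ2 ϑ3 : ℝ)
    (hϑ2 : ϑ2 = (1 - q ^ 2) / (1 - q) - 1)
    (hϑ3 : ϑ3 = (1 - q ^ 3) / (1 - q) - 1)
    (w : ℂ → ℂ)
    (hw : AnalyticOnNhd ℂ w (Metric.ball (0 : ℂ) 1))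
    (hw0 : w 0 = 0)
    (w1 w2 : ℂ) (hw1 : w1 = deriv w 0) (hw2 : w2 = iteratedDeriv 2 w 0 / 2)
    (β : ℝ)
    (ϱ : ℂ) (hϱ : ϱ = 1 + Complex.I * (Real.tan β : ℂ))
    (b : ℂ) (hb : b ≠ 0)
    (p : ℂ → ℂ)
    (hp : AnalyticOnNhd ℂ p (Metric.ball (0 : ℂ) 1))
    (hp0 : p 0 = 1)
    (p1 p2 : ℂ) (hp1 : p1 = deriv p 0) (hp2 : p2 = iteratedDeriv 2 p 0 / 2)
    (hFne : ∀ z ∈ Metric.ball (0 : ℂ) 1, z ≠ 0 → F z ≠ 0)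
    (hsub : ∀ z ∈ Metric.ball (0 : ℂ) 1, z ≠ 0 →
      1 + (1 / b) * (ϱ * (z * DqF z / F z) - ϱ) = p (w z))
    :
    a 2 = -(3 * b * p1 * w1) / (ϱ * (ϑ2 : ℂ)) ∧
    a 3 = (10 * b / (ϱ * (ϑ3 : ℂ))) *
      (p1 * w2 + p2 * w1 ^ 2 + b * p1 ^ 2 * w1 ^ 2 / (ϱ * (ϑ2 : ℂ))) := by
  set c : ℕ → ℂ := fun n =>
    (-1 : ℂ) ^ (n - 1) * a n / (((2 * n - 1 : ℕ) : ℂ) * ((n - 1).factorial : ℂ))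
  replace hF : ∀ z ∈ Metric.ball (0 : ℂ) 1, HasSum (fun n => c n * z ^ n) (F z) := hF
  have hq : (q : ℂ) ≠ 1 := mod_cast hq1.ne
  have h0 : (0 : ℂ) ∈ Metric.ball 0 1 := Metric.mem_ball_self one_pos
  have hFs := hasFPowerSeriesAt_ofScalars_of_hasSum one_pos hF
  have hLs := hasFPowerSeriesAt_ofScalars_of_hasSum one_pos fun z hz =>
    hasSum_qDifference_sub (q := (q : ℂ)) (by simpa [abs_of_pos hq0] using hq1.le) hF hz
  obtain ⟨hc0, hc1, hc2, hc3⟩ : c 0 = 0 ∧ c 1 = 1 ∧ c 2 = -a 2 / 3 ∧ c 3 = a 3 / 10 := by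
    norm_num [c, ha0, ha1, Nat.factorial]
  have hF0 : F 0 = 0 := by simpa [hc0] using hFs.iteratedDeriv_eq_factorial_mul 0
  have hpA : AnalyticAt ℂ p (w 0) := by rw [hw0]; exact hp 0 h0
  have hwA : AnalyticAt ℂ w 0 := hw 0 h0
  have hLG := qDifference_sub_eventuallyEq_of_subordination (Metric.ball_mem_nhds 0 one_pos) hq hb
    hF0 hDqF hFne hsub
  obtain ⟨E2, E3⟩ := coeff_two_three_of_eventuallyEq_mul (G := fun z => p (w z) - 1) hFs hLs
    ((hpA.comp hwA).sub analyticAt_const) hF0 (by simp [hw0, hp0]) hLG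
  have hϑ2c : (ϑ2 : ℂ) = qNumber (q : ℂ) 2 - 1 := by rw [hϑ2]; push_cast; rfl
  have hϑ3c : (ϑ3 : ℂ) = qNumber (q : ℂ) 3 - 1 := by rw [hϑ3]; push_cast; rfl
  simp only [deriv_fun_comp_sub_const hpA.differentiableAt hwA.differentiableAt,
    iteratedDeriv_two_fun_comp_sub_const hpA.contDiffAt hwA.contDiffAt, hw0, ← hp1, ← hw1,
    show iteratedDeriv 2 p 0 = 2 * p2 by rw [hp2]; ring,
    show iteratedDeriv 2 w 0 = 2 * w2 by rw [hw2]; ring, ← hϑ2c, ← hϑ3c, hc1, hc2, hc3] at E2 E3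
  have hϱ0 : ϱ ≠ 0 := fun h => by simpa [hϱ] using congrArg Complex.re h
  have hϑ2_0 : (ϑ2 : ℂ) ≠ 0 :=
    mod_cast (hϑ2 ▸ sub_pos.mpr (one_lt_qNumber hq0 hq1.ne le_rfl)).ne'
  have hϑ3_0 : (ϑ3 : ℂ) ≠ 0 :=
    mod_cast (hϑ3 ▸ sub_pos.mpr (one_lt_qNumber hq0 hq1.ne (by norm_num))).ne'
  constructor
  · field_simp
    linear_combination (-3) * E2
  · field_simp
    linear_combination (10 * ϱ * ϑ2) * E3 + (10 * b * p1 * w1) * E2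

theorem starlike_coeff_formulas
    (q : ℝ) (hq0 : 0 < q) (hq1 : q < 1)
    (a : ℕ → ℂ) (ha0 : a 0 = 0) (ha1 : a 1 = 1)
    (f F DqF : ℂ → ℂ)
    (hf : ∀ z ∈ Metric.ball (0 : ℂ) 1, HasSum (fun n : ℕ => a n * z ^ n) (f z))
    (hF : ∀ z ∈ Metric.ball (0 : ℂ) 1,
      HasSum (fun n : ℕ =>
        (-1 : ℂ) ^ (n - 1) * a n / (((2 * n - 1 : ℕ) : ℂ) * ((n - 1).factorial : ℂ)) * z ^ n)
        (F z))
    (hDq0 : DqF 0 = 1)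
    (hDqF : ∀ z : ℂ, z ≠ 0 → DqF z = (F z - F ((q : ℂ) * z)) / ((1 - (q : ℂ)) * z))
    (ϑ2 ϑ3 : ℝ)
    (hϑ2 : ϑ2 = (1 - q ^ 2) / (1 - q) - 1)
    (hϑ3 : ϑ3 = (1 - q ^ 3) / (1 - q) - 1)
    (w : ℂ → ℂ)
    (hw : AnalyticOnNhd ℂ w (Metric.ball (0 : ℂ) 1))
    (hw0 : w 0 = 0)
    (hwb : ∀ z ∈ Metric.ball (0 : ℂ) 1, ‖w z‖ < 1)
    (w1 w2 : ℂ) (hw1 : w1 = deriv w 0) (hw2 : w2 = iteratedDeriv 2 w 0 / 2)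
    (β : ℝ) (hβ1 : -(Real.pi / 2) < β) (hβ2 : β < Real.pi / 2)
    (ϱ : ℂ) (hϱ : ϱ = 1 + Complex.I * (Real.tan β : ℂ))
    (b : ℂ) (hb : b ≠ 0)
    (p : ℂ → ℂ)
    (hp : AnalyticOnNhd ℂ p (Metric.ball (0 : ℂ) 1))
    (hp0 : p 0 = 1)
    (p1 p2 : ℂ) (hp1 : p1 = deriv p 0) (hp2 : p2 = iteratedDeriv 2 p 0 / 2)
    (hFne : ∀ z ∈ Metric.ball (0 : ℂ) 1, z ≠ 0 → F z ≠ 0)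
    (hsub : ∀ z ∈ Metric.ball (0 : ℂ) 1, z ≠ 0 →
      1 + (1 / b) * (ϱ * (z * DqF z / F z) - ϱ) = p (w z))
    :
    a 2 = -(3 * b * p1 * w1) / (ϱ * (ϑ2 : ℂ)) ∧
    a 3 = (10 * b / (ϱ * (ϑ3 : ℂ))) *
      (p1 * w2 + p2 * w1 ^ 2 + b * p1 ^ 2 * w1 ^ 2 / (ϱ * (ϑ2 : ℂ))) :=
  starlike_coeff_formulas_general q hq0 hq1 a ha0 ha1 F DqF hF hDqF ϑ2 ϑ3 hϑ2 hϑ3 w hw hw0 w1 w2 hw1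
    hw2 β ϱ hϱ b hb p hp hp0 p1 p2 hp1 hp2 hFne hsub
end
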